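/- Let G : (0,∞) → [0,∞) be convex, nonincreasing, nonnegative, with G(0+) < ∞ and finite right derivative G'_+(0) at 0, and let γ > 0, T > 0, n ∈ ℕ. Define G_n(0) = γ 2^{-(n+1)} T + 2^{-2n+1} T² ∫₀¹ G(2^{-n}Ts)(1-s) ds, G_n(t) = 2^{-2n} T² ∫_{-1}^1 G(t + 2^{-n}Ts)(1-|s|) ds for t ≥ 2^{-n}T, and G_n linear on (0, 2^{-n}T). Then G_n is convex, nonincreasing, and nonnegative on [2^{-n}T, ∞), and there exists n₀ such that G_n is convex on [0,∞) for all n ≥ n₀. -/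

import Mathlib

/-!
Write `h = 2⁻ⁿT`. For `t ≥ h`, `G_n(t)` is `h²` times an average of the translates
`G(t + h s)` against the tent weight `1 - |s|`, so it inherits convexity, monotonicity and
nonnegativity from `G`, as well as the lower bound `G'₊(0)` on all secant slopes. On `[0, h]`,
`G_n` is affine with slope `(G_n(h) - G_n(0)) / h ≤ h G(0+) - γ / 2`, because `G_n(0) ≥ γ h / 2`
and `G_n(h) ≤ h² G(0+)`. Once `h` is small this is below `h² G'₊(0)`, hence below every secant
slope of the convex part issued from `h`, and an affine piece with that property glues convexly.
-/

open MeasureTheory intervalIntegral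

/-- The discretized kernel `G_n` of Lemma 3.1:
`G_n(0) = γ 2^{-(n+1)} T + 2^{-2n+1} T² ∫₀¹ G(2^{-n}Ts)(1-s) ds`,
`G_n(t) = 2^{-2n} T² ∫_{-1}^1 G(t + 2^{-n}Ts)(1-|s|) ds` for `t ≥ 2^{-n}T`, and
`G_n` linearly interpolated on `(0, 2^{-n}T)`. -/
noncomputable def Gdisc (γ T : ℝ) (G : ℝ → ℝ) (n : ℕ) : ℝ → ℝ := fun t =>
  if (2 : ℝ) ^ (-(n : ℤ)) * T ≤ t then
    (2 : ℝ) ^ (-(2 * n : ℤ)) * T ^ 2 *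
      ∫ s in (-1 : ℝ)..1, G (t + 2 ^ (-(n : ℤ)) * T * s) * (1 - |s|)
  else
    (γ * 2 ^ (-(n : ℤ) - 1) * T +
        2 ^ (-(2 * n : ℤ) + 1) * T ^ 2 * ∫ s in (0 : ℝ)..1, G (2 ^ (-(n : ℤ)) * T * s) * (1 - s)) +
      t / (2 ^ (-(n : ℤ)) * T) *
        (((2 : ℝ) ^ (-(2 * n : ℤ)) * T ^ 2 *
            ∫ s in (-1 : ℝ)..1, G (2 ^ (-(n : ℤ)) * T + 2 ^ (-(n : ℤ)) * T * s) * (1 - |s|)) -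
          (γ * 2 ^ (-(n : ℤ) - 1) * T +
            2 ^ (-(2 * n : ℤ) + 1) * T ^ 2 *
              ∫ s in (0 : ℝ)..1, G (2 ^ (-(n : ℤ)) * T * s) * (1 - s)))

open Set Filter Topology

section RightDerivative

variable {f : ℝ → ℝ} {a L d : ℝ}

theorem AntitoneOn.le_of_tendsto_nhdsGT (hf : AntitoneOn f (Ioi a))
    (hL : Tendsto f (𝓝[>] a) (𝓝 L)) {x : ℝ} (hx : a < x) : f x ≤ L :=
  ge_of_tendsto hL <| by
    filter_upwards [Ioo_mem_nhdsGT hx] with u hu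
    exact hf hu.1 hx hu.2.le

theorem ConvexOn.slope_le_of_tendsto_nhdsGT (hf : ConvexOn ℝ (Ioi a) f)
    (hL : Tendsto f (𝓝[>] a) (𝓝 L)) {x y : ℝ} (hx : a < x) (hxy : x < y) :
    (f x - L) / (x - a) ≤ (f y - f x) / (y - x) := by
  have hlim : Tendsto (fun u => (f x - f u) / (x - u)) (𝓝[>] a) (𝓝 ((f x - L) / (x - a))) :=
    (tendsto_const_nhds.sub hL).div
      (tendsto_const_nhds.sub (tendsto_id.mono_left nhdsWithin_le_nhds)) (sub_pos.2 hx).ne'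
  refine le_of_tendsto hlim ?_
  filter_upwards [Ioo_mem_nhdsGT hx] with u hu
  exact hf.slope_mono_adjacent hu.1 (hx.trans hxy) hu.2 hxy

theorem ConvexOn.mul_sub_le_sub_of_tendsto_slope_nhdsGT (hf : ConvexOn ℝ (Ioi a) f)
    (hL : Tendsto f (𝓝[>] a) (𝓝 L))
    (hd : Tendsto (fun t => (f t - L) / (t - a)) (𝓝[>] a) (𝓝 d)) {x y : ℝ} (hx : a < x)
    (hxy : x ≤ y) : d * (y - x) ≤ f y - f x := by
  rcases hxy.eq_or_lt with rfl | hxy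
  · simp
  have hslope : d ≤ (f y - f x) / (y - x) := by
    refine le_of_tendsto hd ?_
    filter_upwards [Ioo_mem_nhdsGT hx] with u hu
    exact (hf.slope_le_of_tendsto_nhdsGT hL hu.1 hu.2).trans
      (hf.slope_mono_adjacent hu.1 (hx.trans hxy) hu.2 hxy)
  rwa [le_div_iff₀ (sub_pos.2 hxy)] at hslope

end RightDerivative

theorem ConvexOn.monotoneOn_of_le_left {f : ℝ → ℝ} {h : ℝ} (hf : ConvexOn ℝ (Ici h) f)
    (hmin : ∀ t ∈ Ici h, f h ≤ f t) : MonotoneOn f (Ici h) := by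
  intro x hx y hy hxy
  rcases (mem_Ici.1 hx).eq_or_lt with rfl | hhx
  · exact hmin y hy
  · exact hf.le_right_of_left_le'' self_mem_Ici hy hhx hxy (hmin x hx)

theorem ConvexOn.Ici_of_eqOn_zero {g : ℝ → ℝ} {a h : ℝ} (hah : a ≤ h)
    (hg : ConvexOn ℝ (Ici h) g) (hzero : EqOn g 0 (Icc a h)) (hnonneg : ∀ t ∈ Ici h, 0 ≤ g t) :
    ConvexOn ℝ (Ici a) g := by
  have hgh : g h = 0 := hzero ⟨hah, le_rfl⟩
  have hmono : MonotoneOn g (Ici h) := hg.monotoneOn_of_le_left (hgh ▸ hnonneg)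
  refine (convexOn_univ_piecewise_Iic_of_antitoneOn_Iic_monotoneOn_Ici (convexOn_const 0
    (convex_Iic h)) hg antitoneOn_const hmono hgh.symm).subset (subset_univ _) (convex_Ici a)
    |>.congr fun t ht => ?_
  by_cases hth : t ≤ h
  · simp [piecewise, hth, hzero ⟨ht, hth⟩]
  · simp [piecewise, hth]

theorem ConvexOn.Ici_of_affine_of_le {f : ℝ → ℝ} {a h l : ℝ} (hah : a ≤ h)
    (hf : ConvexOn ℝ (Ici h) f) (haff : ∀ t ∈ Icc a h, f t = f h + l * (t - h))
    (hle : ∀ t ∈ Ici h, f h + l * (t - h) ≤ f t) : ConvexOn ℝ (Ici a) f := by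
  have hlin (c : ℝ) (s : Set ℝ) (hs : Convex ℝ s) : ConvexOn ℝ s (fun t => c * t) :=
    ((c • LinearMap.id : ℝ →ₗ[ℝ] ℝ).convexOn hs).congr fun t _ => by simp
  have hg := ((hf.add (hlin (-l) _ (convex_Ici h))).add_const (l * h - f h)).Ici_of_eqOn_zero
    hah ?_ ?_
  · refine ((hg.add (hlin l _ (convex_Ici a))).add_const (f h - l * h)).congr fun t _ => ?_
    simp only [Pi.add_apply]
    ring
  · intro t ht
    simp only [Pi.add_apply, Pi.zero_apply, haff t ht]
    ring
  · intro t ht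
    simp only [Pi.add_apply]
    linarith [hle t ht]

theorem integral_one_sub_abs : ∫ s in (-1 : ℝ)..1, (1 - |s|) = 1 := by
  have hneg : ∫ s in (-1 : ℝ)..0, (1 - |s|) = ∫ s in (-1 : ℝ)..0, (1 + s) :=
    integral_congr fun s hs => by
      rw [uIcc_of_le (by norm_num)] at hs
      rw [abs_of_nonpos hs.2, sub_neg_eq_add]
  have hpos : ∫ s in (0 : ℝ)..1, (1 - |s|) = ∫ s in (0 : ℝ)..1, (1 - s) :=
    integral_congr fun s hs => by
      rw [uIcc_of_le (by norm_num)] at hs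
      rw [abs_of_nonneg hs.1]
  rw [← integral_add_adjacent_intervals (b := 0), hneg, hpos]
  · rw [intervalIntegral.integral_add intervalIntegrable_const intervalIntegrable_id,
      intervalIntegral.integral_sub intervalIntegrable_const intervalIntegrable_id]
    norm_num [integral_id]
  all_goals exact (continuous_const.sub continuous_abs).intervalIntegrable _ _

noncomputable def tentAvg (G : ℝ → ℝ) (h t : ℝ) : ℝ :=
  ∫ s in (-1 : ℝ)..1, G (t + h * s) * (1 - |s|)

section TentAverage

variable {G : ℝ → ℝ} {h t : ℝ}

theorem one_sub_abs_nonneg_of_mem_Ioc {s : ℝ} (hs : s ∈ Ioc (-1 : ℝ) 1) : 0 ≤ 1 - |s| :=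
  sub_nonneg.2 (abs_le.2 ⟨hs.1.le, hs.2⟩)

theorem add_mul_pos_of_mem_Ioc (hh : 0 < h) (ht : h ≤ t) {s : ℝ} (hs : s ∈ Ioc (-1 : ℝ) 1) :
    0 < t + h * s := by
  nlinarith [hs.1]

theorem intervalIntegrable_mul_one_sub_abs {M : ℝ} (hGc : ContinuousOn G (Ioi 0))
    (hGb : ∀ x ∈ Ioi 0, ‖G x‖ ≤ M) (hh : 0 < h) (ht : h ≤ t) :
    IntervalIntegrable (fun s => G (t + h * s) * (1 - |s|)) volume (-1) 1 := by
  rw [intervalIntegrable_iff_integrableOn_Ioc_of_le (by norm_num)]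
  have hcont : ContinuousOn (fun s => G (t + h * s) * (1 - |s|)) (Ioc (-1) 1) :=
    (hGc.comp (by fun_prop) fun s hs => add_mul_pos_of_mem_Ioc hh ht hs).mul (by fun_prop)
  refine Integrable.mono' (integrableOn_const (C := M) measure_Ioc_lt_top.ne)
    (hcont.aestronglyMeasurable measurableSet_Ioc) ?_
  filter_upwards [ae_restrict_mem measurableSet_Ioc] with s hs
  have htent : ‖1 - |s|‖ ≤ 1 := by
    rw [Real.norm_of_nonneg (one_sub_abs_nonneg_of_mem_Ioc hs)]
    linarith [abs_nonneg s]
  rw [norm_mul]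
  exact (mul_le_of_le_one_right (norm_nonneg _) htent).trans
    (hGb _ (add_mul_pos_of_mem_Ioc hh ht hs))

theorem integral_mul_one_sub_abs_mono {f g : ℝ → ℝ}
    (hf : IntervalIntegrable (fun s => f s * (1 - |s|)) volume (-1) 1)
    (hg : IntervalIntegrable (fun s => g s * (1 - |s|)) volume (-1) 1)
    (hfg : ∀ s ∈ Ioc (-1 : ℝ) 1, f s ≤ g s) :
    ∫ s in (-1 : ℝ)..1, f s * (1 - |s|) ≤ ∫ s in (-1 : ℝ)..1, g s * (1 - |s|) :=
  integral_mono_on_of_le_Ioo (by norm_num) hf hg fun s hs =>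
    mul_le_mul_of_nonneg_right (hfg s (Ioo_subset_Ioc_self hs))
      (one_sub_abs_nonneg_of_mem_Ioc (Ioo_subset_Ioc_self hs))

theorem integral_const_mul_one_sub_abs (c : ℝ) : ∫ s in (-1 : ℝ)..1, c * (1 - |s|) = c := by
  rw [intervalIntegral.integral_const_mul, integral_one_sub_abs, mul_one]

theorem intervalIntegrable_const_mul_one_sub_abs (c : ℝ) :
    IntervalIntegrable (fun s : ℝ => c * (1 - |s|)) volume (-1) 1 :=
  (continuous_const.mul (continuous_const.sub continuous_abs)).intervalIntegrable _ _

theorem tentAvg_nonneg (hG : ∀ x ∈ Ioi 0, 0 ≤ G x) (hh : 0 < h) (ht : h ≤ t) :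
    0 ≤ tentAvg G h t := by
  rw [tentAvg, integral_of_le (by norm_num)]
  exact setIntegral_nonneg measurableSet_Ioc fun s hs =>
    mul_nonneg (hG _ (add_mul_pos_of_mem_Ioc hh ht hs)) (one_sub_abs_nonneg_of_mem_Ioc hs)

theorem tentAvg_le {M : ℝ} (hGc : ContinuousOn G (Ioi 0)) (hGb : ∀ x ∈ Ioi 0, ‖G x‖ ≤ M)
    (hh : 0 < h) (ht : h ≤ t) : tentAvg G h t ≤ M := by
  calc tentAvg G h t ≤ ∫ s in (-1 : ℝ)..1, M * (1 - |s|) :=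
        integral_mul_one_sub_abs_mono (intervalIntegrable_mul_one_sub_abs hGc hGb hh ht)
          (intervalIntegrable_const_mul_one_sub_abs M) fun s hs =>
            (le_abs_self _).trans (hGb _ (add_mul_pos_of_mem_Ioc hh ht hs))
    _ = M := integral_const_mul_one_sub_abs M

theorem antitoneOn_tentAvg {M : ℝ} (hGc : ContinuousOn G (Ioi 0))
    (hGb : ∀ x ∈ Ioi 0, ‖G x‖ ≤ M) (hGanti : AntitoneOn G (Ioi 0)) (hh : 0 < h) :
    AntitoneOn (tentAvg G h) (Ici h) := fun x hx y hy hxy =>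
  integral_mul_one_sub_abs_mono (intervalIntegrable_mul_one_sub_abs hGc hGb hh hy)
    (intervalIntegrable_mul_one_sub_abs hGc hGb hh hx) fun s hs =>
      hGanti (add_mul_pos_of_mem_Ioc hh hx hs) (add_mul_pos_of_mem_Ioc hh hy hs) (by linarith)

theorem mul_sub_le_tentAvg_sub {M d : ℝ} (hGc : ContinuousOn G (Ioi 0))
    (hGb : ∀ x ∈ Ioi 0, ‖G x‖ ≤ M)
    (hGd : ∀ x ∈ Ioi 0, ∀ y, x ≤ y → d * (y - x) ≤ G y - G x) (hh : 0 < h) {x y : ℝ}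
    (hx : h ≤ x) (hxy : x ≤ y) : d * (y - x) ≤ tentAvg G h y - tentAvg G h x := by
  have hIx := intervalIntegrable_mul_one_sub_abs hGc hGb hh hx
  have hIy := intervalIntegrable_mul_one_sub_abs hGc hGb hh (hx.trans hxy)
  calc d * (y - x) = ∫ s in (-1 : ℝ)..1, d * (y - x) * (1 - |s|) :=
        (integral_const_mul_one_sub_abs _).symm
    _ ≤ ∫ s in (-1 : ℝ)..1, (G (y + h * s) - G (x + h * s)) * (1 - |s|) :=
        integral_mul_one_sub_abs_mono (intervalIntegrable_const_mul_one_sub_abs _)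
          (by simpa only [sub_mul] using hIy.sub hIx) fun s hs =>
            by linarith [hGd _ (add_mul_pos_of_mem_Ioc hh hx hs) (y + h * s) (by linarith)]
    _ = tentAvg G h y - tentAvg G h x := by
        simp only [sub_mul]
        exact intervalIntegral.integral_sub hIy hIx

theorem convexOn_tentAvg {M : ℝ} (hGconv : ConvexOn ℝ (Ioi 0) G)
    (hGb : ∀ x ∈ Ioi 0, ‖G x‖ ≤ M) (hh : 0 < h) : ConvexOn ℝ (Ici h) (tentAvg G h) := by
  have hGc := hGconv.continuousOn isOpen_Ioi
  refine ⟨convex_Ici h, fun x hx y hy a b ha hb hab => ?_⟩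
  have hIx := (intervalIntegrable_mul_one_sub_abs hGc hGb hh hx).const_mul a
  have hIy := (intervalIntegrable_mul_one_sub_abs hGc hGb hh hy).const_mul b
  calc tentAvg G h (a • x + b • y)
      ≤ ∫ s in (-1 : ℝ)..1, (a * G (x + h * s) + b * G (y + h * s)) * (1 - |s|) := by
        refine integral_mul_one_sub_abs_mono
          (intervalIntegrable_mul_one_sub_abs hGc hGb hh ((convex_Ici h) hx hy ha hb hab))
          (by simpa only [add_mul, mul_assoc] using hIx.add hIy) fun s hs => ?_
        have hconv := hGconv.2 (add_mul_pos_of_mem_Ioc hh hx hs)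
          (add_mul_pos_of_mem_Ioc hh hy hs) ha hb hab
        simp only [smul_eq_mul] at hconv ⊢
        rwa [show a * (x + h * s) + b * (y + h * s) = a * x + b * y + h * s by
          linear_combination (h * s) * hab] at hconv
    _ = a • tentAvg G h x + b • tentAvg G h y := by
        simp only [add_mul, mul_assoc]
        rw [intervalIntegral.integral_add hIx hIy, intervalIntegral.integral_const_mul,
          intervalIntegral.integral_const_mul]
        rfl

end TentAverage

section Gdisc

variable {γ T : ℝ} {G : ℝ → ℝ} {n : ℕ}

theorem Gdisc_of_le {t : ℝ} (ht : (2 : ℝ) ^ (-(n : ℤ)) * T ≤ t) :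
    Gdisc γ T G n t = ((2 : ℝ) ^ (-(n : ℤ)) * T) ^ 2 * tentAvg G (2 ^ (-(n : ℤ)) * T) t := by
  rw [Gdisc, if_pos ht, tentAvg, mul_pow, ← zpow_natCast (2 ^ _), ← zpow_mul]
  ring_nf

theorem Gdisc_of_lt (hT : 0 < T) {t : ℝ} (ht : t < (2 : ℝ) ^ (-(n : ℤ)) * T) :
    Gdisc γ T G n t = Gdisc γ T G n 0 + t / (2 ^ (-(n : ℤ)) * T) *
      (Gdisc γ T G n (2 ^ (-(n : ℤ)) * T) - Gdisc γ T G n 0) := by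
  have hh : ¬ (2 : ℝ) ^ (-(n : ℤ)) * T ≤ 0 := not_le.2 (by positivity)
  simp only [Gdisc, if_neg (not_le.2 ht), if_neg hh, if_pos le_rfl, zero_div, zero_mul, add_zero]

theorem half_mul_le_Gdisc_zero (hT : 0 < T) (hG : ∀ x ∈ Ioi 0, 0 ≤ G x) :
    γ * (2 ^ (-(n : ℤ)) * T) / 2 ≤ Gdisc γ T G n 0 := by
  have hh : ¬ (2 : ℝ) ^ (-(n : ℤ)) * T ≤ 0 := not_le.2 (by positivity)
  have hint : 0 ≤ ∫ s in (0 : ℝ)..1, G (2 ^ (-(n : ℤ)) * T * s) * (1 - s) := by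
    rw [integral_of_le zero_le_one]
    exact setIntegral_nonneg measurableSet_Ioc fun s hs =>
      mul_nonneg (hG _ (mul_pos (by positivity) hs.1)) (by linarith [hs.2])
  rw [Gdisc, if_neg hh, zero_div, zero_mul, add_zero, zpow_sub₀ two_ne_zero, zpow_one]
  have : 0 ≤ (2 : ℝ) ^ (-(2 * n : ℤ) + 1) * T ^ 2 := by positivity
  nlinarith

theorem convexOn_Gdisc_Ici {M : ℝ} (hT : 0 < T) (hGconv : ConvexOn ℝ (Ioi 0) G)
    (hGb : ∀ x ∈ Ioi 0, ‖G x‖ ≤ M) :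
    ConvexOn ℝ (Ici ((2 : ℝ) ^ (-(n : ℤ)) * T)) (Gdisc γ T G n) :=
  ((convexOn_tentAvg hGconv hGb (by positivity)).smul (sq_nonneg _)).congr fun _ ht =>
    (Gdisc_of_le ht).symm

theorem antitoneOn_Gdisc_Ici {M : ℝ} (hT : 0 < T) (hGc : ContinuousOn G (Ioi 0))
    (hGb : ∀ x ∈ Ioi 0, ‖G x‖ ≤ M) (hGanti : AntitoneOn G (Ioi 0)) :
    AntitoneOn (Gdisc γ T G n) (Ici ((2 : ℝ) ^ (-(n : ℤ)) * T)) := fun x hx y hy hxy => by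
  rw [Gdisc_of_le hx, Gdisc_of_le hy]
  exact mul_le_mul_of_nonneg_left
    (antitoneOn_tentAvg hGc hGb hGanti (by positivity) hx hy hxy) (sq_nonneg _)

theorem Gdisc_nonneg_of_le (hT : 0 < T) (hG : ∀ x ∈ Ioi 0, 0 ≤ G x) {t : ℝ}
    (ht : (2 : ℝ) ^ (-(n : ℤ)) * T ≤ t) : 0 ≤ Gdisc γ T G n t := by
  rw [Gdisc_of_le ht]
  exact mul_nonneg (sq_nonneg _) (tentAvg_nonneg hG (by positivity) ht)

theorem convexOn_Gdisc_Ici_zero {M d : ℝ} (hT : 0 < T) (hGconv : ConvexOn ℝ (Ioi 0) G)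
    (hG : ∀ x ∈ Ioi 0, 0 ≤ G x) (hGb : ∀ x ∈ Ioi 0, ‖G x‖ ≤ M)
    (hGd : ∀ x ∈ Ioi 0, ∀ y, x ≤ y → d * (y - x) ≤ G y - G x)
    (hsmall : (2 : ℝ) ^ (-(n : ℤ)) * T * M - γ / 2 ≤ ((2 : ℝ) ^ (-(n : ℤ)) * T) ^ 2 * d) :
    ConvexOn ℝ (Ici 0) (Gdisc γ T G n) := by
  set h := (2 : ℝ) ^ (-(n : ℤ)) * T with h_def
  have hh : 0 < h := by positivity
  have hGc := hGconv.continuousOn isOpen_Ioi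
  set l := (Gdisc γ T G n h - Gdisc γ T G n 0) / h with hl_def
  have hl : l ≤ h ^ 2 * d := by
    have hKh := tentAvg_le hGc hGb hh le_rfl
    have h0 := half_mul_le_Gdisc_zero (γ := γ) (n := n) hT hG
    rw [div_le_iff₀ hh, Gdisc_of_le le_rfl]
    nlinarith
  refine (convexOn_Gdisc_Ici hT hGconv hGb).Ici_of_affine_of_le (l := l) hh.le ?_ fun t ht => ?_
  · rintro t ⟨-, ht⟩
    rcases ht.eq_or_lt with rfl | ht
    · ring
    · rw [Gdisc_of_lt hT ht, ← h_def, hl_def]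
      field_simp
      ring
  · rw [Gdisc_of_le ht, Gdisc_of_le le_rfl]
    have := mul_sub_le_tentAvg_sub hGc hGb hGd hh le_rfl ht
    nlinarith [mul_le_mul_of_nonneg_right hl (sub_nonneg.2 (mem_Ici.1 ht))]

theorem eventually_step_mul_sub_le {γ : ℝ} (hγ : 0 < γ) (T M d : ℝ) :
    ∀ᶠ n : ℕ in atTop,
      (2 : ℝ) ^ (-(n : ℤ)) * T * M - γ / 2 ≤ ((2 : ℝ) ^ (-(n : ℤ)) * T) ^ 2 * d := by
  have hstep : Tendsto (fun n : ℕ => (2 : ℝ) ^ (-(n : ℤ)) * T) atTop (𝓝 0) := by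
    simpa [zpow_neg] using
      (tendsto_inv_atTop_zero.comp (tendsto_pow_atTop_atTop_of_one_lt one_lt_two)).mul_const T
  have hlim := (hstep.mul_const M).sub (hstep.pow 2 |>.mul_const d)
  rw [zero_mul, zero_pow two_ne_zero, zero_mul, sub_zero] at hlim
  filter_upwards [hlim.eventually (gt_mem_nhds (half_pos hγ))] with n hn
  linarith

end Gdisc

/-- for convex, nonincreasing, nonnegative `G` with finite `G(0+)` and finite
right-hand derivative at `0`, each `G_n` is convex, nonincreasing and nonnegative on
`[2^{-n}T, ∞)`, and `G_n` is convex on `[0,∞)` for all sufficiently large `n`. -/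
theorem stmt18 (γ T : ℝ) (hγ : 0 < γ) (hT : 0 < T) (G : ℝ → ℝ)
    (hGconv : ConvexOn ℝ (Set.Ioi 0) G)
    (hGanti : AntitoneOn G (Set.Ioi 0))
    (hGnonneg : ∀ t, 0 < t → 0 ≤ G t)
    (G0 : ℝ) (hG0 : Filter.Tendsto G (nhdsWithin 0 (Set.Ioi 0)) (nhds G0))
    (d : ℝ)
    (hd : Filter.Tendsto (fun t => (G t - G0) / t) (nhdsWithin 0 (Set.Ioi 0)) (nhds d)) :
    (∀ n : ℕ,
      ConvexOn ℝ (Set.Ici ((2 : ℝ) ^ (-(n : ℤ)) * T)) (Gdisc γ T G n) ∧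
      AntitoneOn (Gdisc γ T G n) (Set.Ici ((2 : ℝ) ^ (-(n : ℤ)) * T)) ∧
      ∀ t ∈ Set.Ici ((2 : ℝ) ^ (-(n : ℤ)) * T), 0 ≤ Gdisc γ T G n t) ∧
    ∃ n₀ : ℕ, ∀ n ≥ n₀, ConvexOn ℝ (Set.Ici (0 : ℝ)) (Gdisc γ T G n) := by
  have hGc := hGconv.continuousOn isOpen_Ioi
  have hGb : ∀ x ∈ Ioi 0, ‖G x‖ ≤ G0 := fun x hx => by
    rw [Real.norm_of_nonneg (hGnonneg x hx)]
    exact hGanti.le_of_tendsto_nhdsGT hG0 hx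
  have hGd : ∀ x ∈ Ioi 0, ∀ y, x ≤ y → d * (y - x) ≤ G y - G x := fun x hx y =>
    hGconv.mul_sub_le_sub_of_tendsto_slope_nhdsGT hG0 (by simpa using hd) hx
  obtain ⟨n₀, hn₀⟩ := eventually_atTop.1 (eventually_step_mul_sub_le hγ T G0 d)
  refine ⟨fun n => ⟨convexOn_Gdisc_Ici hT hGconv hGb, antitoneOn_Gdisc_Ici hT hGc hGb hGanti,
    fun t ht => Gdisc_nonneg_of_le hT hGnonneg ht⟩, n₀, fun n hn => ?_⟩
  exact convexOn_Gdisc_Ici_zero hT hGconv hGnonneg hGb hGd (hn₀ n hn)
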